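/- arXiv:2008.12666 — 5 statements merged into one kernel-verified Lean document; each statement's English description precedes it below -/
import Mathlib

section
/- Let N ≥ 2 be an integer and 0 < c < 1. Let h : [0,∞) → [0,∞) be continuous and nondecreasing with h(0) = 0, h(s) > 0 for s > 0, and such that s ↦ s^{(N-1)/N}/h(s) is nondecreasing on (0,∞). Let V : [0,∞) → [0,∞) be a C¹ increasing bijection with V(0) = 0 satisfying c·h(V(R)) ≤ V'(R) ≤ c^{-1}·h(V(R)) for all R > 0. Then there exists a constant γ > 1, depending only on N and c, such that: γ^{-1}·λ·V(R) ≤ V(λR) ≤ γ·λ^N·V(R) for all λ ≥ 1 and R > 0, and γ^{-1}·λ^N·V(R) ≤ V(λR) ≤ γ·λ·V(R) for all 0 < λ ≤ 1 and R > 0. -/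
/-!
On `(0, ∞)` the two-sided bound `V' ≍ h ∘ V` makes `V'` monotone up to the factor `c²`, because
`h` is monotone; and, because `s ↦ h s / s ^ ((N-1)/N)` is nonincreasing, it makes the derivative
`V' / (N V ^ ((N-1)/N))` of `V ^ (1/N)` antitone up to the same factor. A function vanishing at `0`
whose derivative is monotone (antitone) up to a factor `K ≤ 1` grows at least (at most) linearly up
to that factor, by the mean value theorem on `[0, R]` and `[R, λR]`. Applied to `V` and to
`V ^ (1/N)` this gives the bounds for `λ ≥ 1`, and the bounds for `λ ≤ 1` follow by rescaling.
-/

open Set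

section QuasiMonotoneDeriv

variable {f f' : ℝ → ℝ} {K : ℝ}

theorem exists_eq_mul_deriv_of_continuousOn_Ici (hf : ContinuousOn f (Ici 0))
    (hf' : ∀ x, 0 < x → HasDerivAt f (f' x) x) {a b : ℝ} (ha : 0 ≤ a) (hab : a < b) :
    ∃ ξ ∈ Ioo a b, f b - f a = (b - a) * f' ξ := by
  obtain ⟨ξ, hξ, hslope⟩ := exists_hasDerivAt_eq_slope f f' hab
    (hf.mono fun x hx => ha.trans hx.1) fun x hx => hf' x (ha.trans_lt hx.1)
  exact ⟨ξ, hξ, by rw [hslope, mul_div_cancel₀ _ (sub_ne_zero.2 hab.ne')]⟩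

theorem mul_mul_le_apply_mul_of_quasiMonotone_deriv (hK : K ≤ 1) (hf : ContinuousOn f (Ici 0))
    (hf' : ∀ x, 0 < x → HasDerivAt f (f' x) x) (hf0 : f 0 = 0)
    (hmono : ∀ s t, 0 < s → s ≤ t → K * f' s ≤ f' t)
    {lam R : ℝ} (hlam : 1 ≤ lam) (hR : 0 < R) (hfR : 0 ≤ f R) :
    K * (lam * f R) ≤ f (lam * R) := by
  rcases hlam.eq_or_lt with rfl | hlam
  · simpa using mul_le_of_le_one_left hfR hK
  obtain ⟨ξ₀, hξ₀, hf₀⟩ := exists_eq_mul_deriv_of_continuousOn_Ici hf hf' le_rfl hR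
  obtain ⟨ξ, hξ, hf₁⟩ :=
    exists_eq_mul_deriv_of_continuousOn_Ici hf hf' hR.le (lt_mul_of_one_lt_left hR hlam)
  rw [hf0, sub_zero, sub_zero] at hf₀
  have hcmp : (lam * R - R) * (K * f' ξ₀) ≤ (lam * R - R) * f' ξ :=
    mul_le_mul_of_nonneg_left (hmono ξ₀ ξ hξ₀.1 (hξ₀.2.trans hξ.1).le)
      (sub_nonneg.2 (hξ.1.trans hξ.2).le)
  have hrescale : (lam * R - R) * (K * f' ξ₀) = (lam - 1) * K * f R := by rw [hf₀]; ring
  linarith [mul_le_of_le_one_left hfR hK]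

theorem mul_apply_mul_le_of_quasiAntitone_deriv (hK : K ≤ 1) (hf : ContinuousOn f (Ici 0))
    (hf' : ∀ x, 0 < x → HasDerivAt f (f' x) x) (hf0 : f 0 = 0)
    (hanti : ∀ s t, 0 < s → s ≤ t → K * f' t ≤ f' s)
    {lam R : ℝ} (hlam : 1 ≤ lam) (hR : 0 < R) (hfR : 0 ≤ f R) :
    K * f (lam * R) ≤ lam * f R := by
  rcases hlam.eq_or_lt with rfl | hlam
  · simpa using mul_le_of_le_one_left hfR hK
  obtain ⟨ξ₀, hξ₀, hf₀⟩ := exists_eq_mul_deriv_of_continuousOn_Ici hf hf' le_rfl hR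
  obtain ⟨ξ, hξ, hf₁⟩ :=
    exists_eq_mul_deriv_of_continuousOn_Ici hf hf' hR.le (lt_mul_of_one_lt_left hR hlam)
  rw [hf0, sub_zero, sub_zero] at hf₀
  have hcmp : (lam * R - R) * (K * f' ξ) ≤ (lam * R - R) * f' ξ₀ :=
    mul_le_mul_of_nonneg_left (hanti ξ₀ ξ hξ₀.1 (hξ₀.2.trans hξ.1).le)
      (sub_nonneg.2 (hξ.1.trans hξ.2).le)
  have hrescale : (lam * R - R) * f' ξ₀ = (lam - 1) * f R := by rw [hf₀]; ring
  have hstep : K * f (lam * R) = K * f R + (lam * R - R) * (K * f' ξ) := by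
    linear_combination K * hf₁
  linarith [mul_le_of_le_one_left hfR hK]

end QuasiMonotoneDeriv

theorem sq_mul_le_of_le_inv_mul_of_mul_le {c g₁ g₂ u₁ u₂ : ℝ} (hc : 0 < c)
    (hu₁ : u₁ ≤ c⁻¹ * g₁) (hu₂ : c * g₂ ≤ u₂) (hg : g₁ ≤ g₂) : c ^ 2 * u₁ ≤ u₂ :=
  calc c ^ 2 * u₁ ≤ c ^ 2 * (c⁻¹ * g₁) := by gcongr
    _ = c * g₁ := by field_simp
    _ ≤ c * g₂ := by gcongr
    _ ≤ u₂ := hu₂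

theorem HasDerivAt.rpow_inv_natCast {V : ℝ → ℝ} {v x : ℝ} {N : ℕ} (hV : HasDerivAt V v x)
    (hVx : 0 < V x) (hN : N ≠ 0) :
    HasDerivAt (fun y => V y ^ (N : ℝ)⁻¹) (v / (N * V x ^ (((N : ℝ) - 1) / N))) x := by
  convert hV.rpow_const (p := (N : ℝ)⁻¹) (Or.inl hVx.ne') using 1
  have hexp : (N : ℝ)⁻¹ - 1 = -(((N : ℝ) - 1) / N) := by field_simp; ring
  rw [hexp, Real.rpow_neg hVx.le]
  field_simp

namespace VolumeGrowth

variable {N : ℕ} {c : ℝ} {h V V' : ℝ → ℝ}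

theorem quasiMonotone_deriv (hc0 : 0 < c) (hh_mono : MonotoneOn h (Ici 0))
    (hVpos : ∀ x, 0 < x → 0 < V x) (hV_mono : MonotoneOn V (Ioi 0))
    (hV'_lb : ∀ R, 0 < R → c * h (V R) ≤ V' R) (hV'_ub : ∀ R, 0 < R → V' R ≤ c⁻¹ * h (V R))
    {s t : ℝ} (hs : 0 < s) (hst : s ≤ t) : c ^ 2 * V' s ≤ V' t := by
  have ht := hs.trans_le hst
  refine sq_mul_le_of_le_inv_mul_of_mul_le hc0 (hV'_ub s hs) (hV'_lb t ht) ?_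
  exact hh_mono (hVpos s hs).le (hVpos t ht).le (hV_mono hs ht hst)

theorem quasiAntitone_deriv_rpow_inv (hc0 : 0 < c) (hh_pos : ∀ s, 0 < s → 0 < h s)
    (hω_mono : MonotoneOn (fun s : ℝ => s ^ (((N : ℝ) - 1) / N) / h s) (Ioi 0))
    (hVpos : ∀ x, 0 < x → 0 < V x) (hV_mono : MonotoneOn V (Ioi 0))
    (hV'_lb : ∀ R, 0 < R → c * h (V R) ≤ V' R) (hV'_ub : ∀ R, 0 < R → V' R ≤ c⁻¹ * h (V R))
    {s t : ℝ} (hs : 0 < s) (hst : s ≤ t) :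
    c ^ 2 * (V' t / (N * V t ^ (((N : ℝ) - 1) / N))) ≤
      V' s / (N * V s ^ (((N : ℝ) - 1) / N)) := by
  set α : ℝ := ((N : ℝ) - 1) / N
  have ht := hs.trans_le hst
  have hVs := hVpos s hs
  have hVt := hVpos t ht
  have hω : V s ^ α / h (V s) ≤ V t ^ α / h (V t) := hω_mono hVs hVt (hV_mono hs ht hst)
  refine sq_mul_le_of_le_inv_mul_of_mul_le hc0 (g₁ := h (V t) / (N * V t ^ α))
    (g₂ := h (V s) / (N * V s ^ α)) ?_ ?_ ?_
  · rw [← mul_div_assoc]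
    gcongr
    exact hV'_ub t ht
  · rw [← mul_div_assoc]
    gcongr
    exact hV'_lb s hs
  · rw [div_le_div_iff₀ (hh_pos _ hVs) (hh_pos _ hVt)] at hω
    rw [mul_comm (N : ℝ), mul_comm (N : ℝ), ← div_div, ← div_div]
    refine div_le_div_of_nonneg_right ?_ N.cast_nonneg
    rw [div_le_div_iff₀ (Real.rpow_pos_of_pos hVt α) (Real.rpow_pos_of_pos hVs α)]
    linarith

theorem sq_mul_mul_le_apply_mul (hc0 : 0 < c) (hc1 : c ≤ 1) (hh_mono : MonotoneOn h (Ici 0))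
    (hV_deriv : ∀ R, 0 ≤ R → HasDerivAt V (V' R) R) (hV0 : V 0 = 0)
    (hVpos : ∀ x, 0 < x → 0 < V x) (hV_mono : MonotoneOn V (Ioi 0))
    (hV'_lb : ∀ R, 0 < R → c * h (V R) ≤ V' R) (hV'_ub : ∀ R, 0 < R → V' R ≤ c⁻¹ * h (V R))
    {lam R : ℝ} (hlam : 1 ≤ lam) (hR : 0 < R) : c ^ 2 * (lam * V R) ≤ V (lam * R) :=
  mul_mul_le_apply_mul_of_quasiMonotone_deriv (pow_le_one₀ hc0.le hc1)
    (fun x hx => (hV_deriv x hx).continuousAt.continuousWithinAt)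
    (fun x hx => hV_deriv x hx.le) hV0
    (fun _ _ hs hst => quasiMonotone_deriv hc0 hh_mono hVpos hV_mono hV'_lb hV'_ub hs hst)
    hlam hR (hVpos R hR).le

theorem apply_mul_le_pow_mul (hN : N ≠ 0) (hc0 : 0 < c) (hc1 : c ≤ 1)
    (hh_pos : ∀ s, 0 < s → 0 < h s)
    (hω_mono : MonotoneOn (fun s : ℝ => s ^ (((N : ℝ) - 1) / N) / h s) (Ioi 0))
    (hV_deriv : ∀ R, 0 ≤ R → HasDerivAt V (V' R) R) (hV0 : V 0 = 0)
    (hVpos : ∀ x, 0 < x → 0 < V x) (hV_mono : MonotoneOn V (Ioi 0))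
    (hV'_lb : ∀ R, 0 < R → c * h (V R) ≤ V' R) (hV'_ub : ∀ R, 0 < R → V' R ≤ c⁻¹ * h (V R))
    {lam R : ℝ} (hlam : 1 ≤ lam) (hR : 0 < R) :
    V (lam * R) ≤ (c ^ 2)⁻¹ ^ N * lam ^ N * V R := by
  have hVlamR : 0 ≤ V (lam * R) := (hVpos _ (mul_pos (by linarith) hR)).le
  have hroot : c ^ 2 * V (lam * R) ^ (N : ℝ)⁻¹ ≤ lam * V R ^ (N : ℝ)⁻¹ :=
    mul_apply_mul_le_of_quasiAntitone_deriv (pow_le_one₀ hc0.le hc1)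
      (fun x hx => (hV_deriv x hx).continuousAt.continuousWithinAt.rpow_const
        (Or.inr (by positivity)))
      (fun x hx => (hV_deriv x hx.le).rpow_inv_natCast (hVpos x hx) hN)
      (by simp [hV0, hN])
      (fun _ _ hs hst =>
        quasiAntitone_deriv_rpow_inv hc0 hh_pos hω_mono hVpos hV_mono hV'_lb hV'_ub hs hst)
      hlam hR (Real.rpow_nonneg (hVpos R hR).le _)
  have hroot' : V (lam * R) ^ (N : ℝ)⁻¹ ≤ (c ^ 2)⁻¹ * lam * V R ^ (N : ℝ)⁻¹ := by
    rw [mul_assoc, ← div_eq_inv_mul, le_div_iff₀' (by positivity)]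
    exact hroot
  calc V (lam * R) = (V (lam * R) ^ (N : ℝ)⁻¹) ^ N :=
        (Real.rpow_inv_natCast_pow hVlamR hN).symm
    _ ≤ ((c ^ 2)⁻¹ * lam * V R ^ (N : ℝ)⁻¹) ^ N :=
        pow_le_pow_left₀ (Real.rpow_nonneg hVlamR _) hroot' N
    _ = (c ^ 2)⁻¹ ^ N * lam ^ N * V R := by
        rw [mul_pow, mul_pow, Real.rpow_inv_natCast_pow (hVpos R hR).le hN]

end VolumeGrowth

theorem small_scale_bounds_of_large_scale {V : ℝ → ℝ} {γ p : ℝ} (hγ : 0 < γ)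
    (hlarge : ∀ lam R : ℝ, 1 ≤ lam → 0 < R →
      γ⁻¹ * lam * V R ≤ V (lam * R) ∧ V (lam * R) ≤ γ * lam ^ p * V R)
    {lam R : ℝ} (hlam0 : 0 < lam) (hlam1 : lam ≤ 1) (hR : 0 < R) :
    γ⁻¹ * lam ^ p * V R ≤ V (lam * R) ∧ V (lam * R) ≤ γ * lam * V R := by
  obtain ⟨hlow, hup⟩ := hlarge lam⁻¹ (lam * R) (one_le_inv₀ hlam0 |>.mpr hlam1) (by positivity)
  rw [inv_mul_cancel_left₀ hlam0.ne'] at hlow hup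
  rw [Real.inv_rpow hlam0.le] at hup
  have hlamp : 0 < lam ^ p := Real.rpow_pos_of_pos hlam0 p
  constructor
  · calc γ⁻¹ * lam ^ p * V R ≤ γ⁻¹ * lam ^ p * (γ * (lam ^ p)⁻¹ * V (lam * R)) := by gcongr
      _ = V (lam * R) := by field_simp
  · calc V (lam * R) = γ * lam * (γ⁻¹ * lam⁻¹ * V (lam * R)) := by field_simp
      _ ≤ γ * lam * V R := by gcongr

theorem volume_doubling_from_isoperimetry_general
    (N : ℕ) (hN : 2 ≤ N) (c : ℝ) (hc0 : 0 < c) (hc1 : c < 1)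
    (h : ℝ → ℝ)
    (hh_mono : MonotoneOn h (Set.Ici 0))
    (hh_pos : ∀ s : ℝ, 0 < s → 0 < h s)
    (hω_mono : MonotoneOn (fun s : ℝ => s ^ (((N : ℝ) - 1) / N) / h s) (Set.Ioi 0))
    (V V' : ℝ → ℝ)
    (hV_deriv : ∀ R : ℝ, 0 ≤ R → HasDerivAt V (V' R) R)
    (hV_mono : StrictMonoOn V (Set.Ici 0))
    (hV0 : V 0 = 0)
    (hV'_lb : ∀ R : ℝ, 0 < R → c * h (V R) ≤ V' R)
    (hV'_ub : ∀ R : ℝ, 0 < R → V' R ≤ c⁻¹ * h (V R)) :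
    ∃ γ : ℝ, 1 < γ ∧
      (∀ lam R : ℝ, 1 ≤ lam → 0 < R →
        γ⁻¹ * lam * V R ≤ V (lam * R) ∧ V (lam * R) ≤ γ * lam ^ (N : ℝ) * V R) ∧
      (∀ lam R : ℝ, 0 < lam → lam ≤ 1 → 0 < R →
        γ⁻¹ * lam ^ (N : ℝ) * V R ≤ V (lam * R) ∧ V (lam * R) ≤ γ * lam * V R) := by
  have hVpos : ∀ x, 0 < x → 0 < V x := fun x hx =>
    hV0 ▸ hV_mono self_mem_Ici hx.le hx
  have hV_mono' : MonotoneOn V (Ioi 0) := hV_mono.monotoneOn.mono Ioi_subset_Ici_self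
  have hγ : 1 < (c ^ 2)⁻¹ ^ N :=
    one_lt_pow₀ (one_lt_inv₀ (by positivity) |>.mpr (pow_lt_one₀ hc0.le hc1 two_ne_zero))
      (by omega)
  have hγ_inv : ((c ^ 2)⁻¹ ^ N)⁻¹ ≤ c ^ 2 := by
    rw [inv_pow, inv_inv]
    exact pow_le_of_le_one (by positivity) (pow_le_one₀ hc0.le hc1.le) (by omega)
  have hlarge : ∀ lam R : ℝ, 1 ≤ lam → 0 < R → ((c ^ 2)⁻¹ ^ N)⁻¹ * lam * V R ≤ V (lam * R) ∧
      V (lam * R) ≤ (c ^ 2)⁻¹ ^ N * lam ^ (N : ℝ) * V R := fun lam R hlam hR => by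
    refine ⟨?_, ?_⟩
    · calc ((c ^ 2)⁻¹ ^ N)⁻¹ * lam * V R ≤ c ^ 2 * (lam * V R) := by
            rw [mul_assoc]; gcongr; exact mul_nonneg (by linarith) (hVpos R hR).le
        _ ≤ V (lam * R) := VolumeGrowth.sq_mul_mul_le_apply_mul hc0 hc1.le hh_mono hV_deriv hV0
            hVpos hV_mono' hV'_lb hV'_ub hlam hR
    · rw [Real.rpow_natCast]
      exact VolumeGrowth.apply_mul_le_pow_mul (by omega) hc0 hc1.le hh_pos hω_mono hV_deriv hV0
        hVpos hV_mono' hV'_lb hV'_ub hlam hR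
  exact ⟨_, hγ, hlarge, fun lam R hlam0 hlam1 hR =>
    small_scale_bounds_of_large_scale (by positivity) hlarge hlam0 hlam1 hR⟩

/-- Let `N ≥ 2`, `0 < c < 1`, let `h` be an isoperimetric profile
(continuous, nondecreasing, `h 0 = 0`, `h > 0` on `(0,∞)`, with
`s ↦ s ^ ((N-1)/N) / h s` nondecreasing on `(0,∞)`), and let `V` be a `C¹` increasing
bijection of `[0,∞)` with `V 0 = 0` and `c * h (V R) ≤ V' R ≤ c⁻¹ * h (V R)` for `R > 0`.
Then there is `γ > 1` with `γ⁻¹ * λ * V R ≤ V (λ R) ≤ γ * λ ^ N * V R` for `λ ≥ 1` and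
`γ⁻¹ * λ ^ N * V R ≤ V (λ R) ≤ γ * λ * V R` for `0 < λ ≤ 1`, for all `R > 0`. -/
theorem volume_doubling_from_isoperimetry
    (N : ℕ) (hN : 2 ≤ N) (c : ℝ) (hc0 : 0 < c) (hc1 : c < 1)
    (h : ℝ → ℝ)
    (hh_cont : ContinuousOn h (Set.Ici 0))
    (hh_mono : MonotoneOn h (Set.Ici 0))
    (hh0 : h 0 = 0)
    (hh_pos : ∀ s : ℝ, 0 < s → 0 < h s)
    (hω_mono : MonotoneOn (fun s : ℝ => s ^ (((N : ℝ) - 1) / N) / h s) (Set.Ioi 0))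
    (V V' : ℝ → ℝ)
    (hV_deriv : ∀ R : ℝ, 0 ≤ R → HasDerivAt V (V' R) R)
    (hV'_cont : ContinuousOn V' (Set.Ici 0))
    (hV_mono : StrictMonoOn V (Set.Ici 0))
    (hV0 : V 0 = 0)
    (hV_surj : ∀ y : ℝ, 0 ≤ y → ∃ x : ℝ, 0 ≤ x ∧ V x = y)
    (hV'_lb : ∀ R : ℝ, 0 < R → c * h (V R) ≤ V' R)
    (hV'_ub : ∀ R : ℝ, 0 < R → V' R ≤ c⁻¹ * h (V R)) :
    ∃ γ : ℝ, 1 < γ ∧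
      (∀ lam R : ℝ, 1 ≤ lam → 0 < R →
        γ⁻¹ * lam * V R ≤ V (lam * R) ∧ V (lam * R) ≤ γ * lam ^ (N : ℝ) * V R) ∧
      (∀ lam R : ℝ, 0 < lam → lam ≤ 1 → 0 < R →
        γ⁻¹ * lam ^ (N : ℝ) * V R ≤ V (lam * R) ∧ V (lam * R) ≤ γ * lam * V R) :=
  volume_doubling_from_isoperimetry_general N hN c hc0 hc1 h hh_mono hh_pos hω_mono V V' hV_deriv
    hV_mono hV0 hV'_lb hV'_ub
end

section
/- Let N ≥ 2 be an integer and let h : [0,∞) → [0,∞) be continuous and nondecreasing with h(0) = 0, h(s) > 0 for s > 0, and such that s ↦ s^{(N-1)/N}/h(s) is nondecreasing on (0,∞). Then for every v > 0: (N/2)·(2^{1/N} − 1)·v/h(v) ≤ ∫_0^v ds/h(s) ≤ N·v/h(v). -/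
/-!
Write `ω(s) = s ^ a / h s` with `a = (N - 1) / N < 1`. Monotonicity of `ω` gives
`1 / h s = ω s * s ^ (-a) ≤ ω v * s ^ (-a)` on `(0, v]`, and integrating this power yields the
upper bound `v / ((1 - a) h v) = N v / h v`. Monotonicity of `h` gives `1 / h s ≥ 1 / h v` on
`(0, v]`, hence `∫₀^v 1 / h ≥ v / h v`, and Bernoulli's inequality `2 ^ (1 / N) ≤ 1 + 1 / N`
shows that the constant `(N / 2) (2 ^ (1 / N) - 1)` is at most `1 / 2`.
-/

open MeasureTheory Set

section InverseProfile

variable {g : ℝ → ℝ} {a v : ℝ}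

theorem inv_eq_rpow_div_mul_rpow_neg {s : ℝ} (hs : 0 < s) (x : ℝ) :
    x⁻¹ = s ^ a / x * s ^ (-a) := by
  rw [Real.rpow_neg hs.le, div_eq_mul_inv, mul_right_comm,
    mul_inv_cancel₀ (Real.rpow_pos_of_pos hs a).ne', one_mul]

theorem inv_le_rpow_div_mul_rpow_neg (hω : MonotoneOn (fun s => s ^ a / g s) (Ioi 0)) {s : ℝ}
    (hs : 0 < s) (hsv : s ≤ v) :
    (g s)⁻¹ ≤ v ^ a / g v * s ^ (-a) := by
  calc (g s)⁻¹ = s ^ a / g s * s ^ (-a) := inv_eq_rpow_div_mul_rpow_neg hs _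
    _ ≤ v ^ a / g v * s ^ (-a) :=
        mul_le_mul_of_nonneg_right (hω hs (hs.trans_le hsv) hsv) (Real.rpow_nonneg hs.le _)

theorem intervalIntegrable_inv_of_monotoneOn_rpow_div (hg : ∀ s, 0 < s → 0 < g s)
    (hω : MonotoneOn (fun s => s ^ a / g s) (Ioi 0)) (ha : a < 1) (hv : 0 ≤ v) :
    IntervalIntegrable (fun s => (g s)⁻¹) volume 0 v := by
  have hbound : IntervalIntegrable (fun s => v ^ a / g v * s ^ (-a)) volume 0 v :=
    (intervalIntegral.intervalIntegrable_rpow' (by linarith)).const_mul _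
  -- `1 / g` is the product of the monotone `ω` and a continuous power on `(0, ∞)`.
  have hmeas : AEStronglyMeasurable (fun s => (g s)⁻¹) (volume.restrict (Ioc 0 v)) := by
    have hprod : AEMeasurable (fun s => s ^ a / g s * s ^ (-a)) (volume.restrict (Ioc 0 v)) :=
      ((aemeasurable_restrict_of_monotoneOn measurableSet_Ioc
        (hω.mono Ioc_subset_Ioi_self)).mul (by fun_prop))
    refine (hprod.congr ?_).aestronglyMeasurable
    filter_upwards [ae_restrict_mem measurableSet_Ioc] with s hs
    exact (inv_eq_rpow_div_mul_rpow_neg hs.1 _).symm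
  refine hbound.mono_fun' (by rwa [uIoc_of_le hv]) ?_
  rw [uIoc_of_le hv]
  filter_upwards [ae_restrict_mem measurableSet_Ioc] with s hs
  rw [Real.norm_of_nonneg (inv_nonneg.mpr (hg s hs.1).le)]
  exact inv_le_rpow_div_mul_rpow_neg hω hs.1 hs.2

theorem integral_inv_le_of_monotoneOn_rpow_div (hg : ∀ s, 0 < s → 0 < g s)
    (hω : MonotoneOn (fun s => s ^ a / g s) (Ioi 0)) (ha : a < 1) (hv : 0 < v) :
    ∫ s in (0 : ℝ)..v, (g s)⁻¹ ≤ v / ((1 - a) * g v) := by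
  have hpow : ∫ s in (0 : ℝ)..v, v ^ a / g v * s ^ (-a) = v / ((1 - a) * g v) := by
    have h1a : -a + 1 ≠ 0 := by linarith
    have hva : v ^ a * v ^ (-a + 1) = v := by
      rw [← Real.rpow_add hv, add_neg_cancel_left, Real.rpow_one]
    rw [intervalIntegral.integral_const_mul, integral_rpow (Or.inl (by linarith)),
      Real.zero_rpow h1a, sub_zero, div_mul_div_comm, hva]
    ring
  rw [← hpow]
  refine intervalIntegral.integral_mono_on_of_le_Ioo hv.le
    (intervalIntegrable_inv_of_monotoneOn_rpow_div hg hω ha hv.le)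
    ((intervalIntegral.intervalIntegrable_rpow' (by linarith)).const_mul _) ?_
  exact fun s hs => inv_le_rpow_div_mul_rpow_neg hω hs.1 hs.2.le

theorem div_le_integral_inv_of_monotoneOn (hg : ∀ s, 0 < s → 0 < g s)
    (hmono : MonotoneOn g (Ioi 0)) (hint : IntervalIntegrable (fun s => (g s)⁻¹) volume 0 v)
    (hv : 0 ≤ v) :
    v / g v ≤ ∫ s in (0 : ℝ)..v, (g s)⁻¹ := by
  calc v / g v = ∫ _ in (0 : ℝ)..v, (g v)⁻¹ := by simp [div_eq_mul_inv]
    _ ≤ ∫ s in (0 : ℝ)..v, (g s)⁻¹ :=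
      intervalIntegral.integral_mono_on_of_le_Ioo hv intervalIntegrable_const hint
        fun s hs => inv_anti₀ (hg s hs.1) (hmono hs.1 (hs.1.trans hs.2) hs.2.le)

end InverseProfile

theorem mul_two_rpow_inv_sub_one_le_one {n : ℝ} (hn : 1 ≤ n) : n * (2 ^ n⁻¹ - 1) ≤ 1 := by
  have hn0 : 0 < n := by linarith
  have hbernoulli : (1 + 1 : ℝ) ^ n⁻¹ ≤ 1 + n⁻¹ * 1 :=
    rpow_one_add_le_one_add_mul_self (by norm_num) (inv_nonneg.mpr hn0.le)
      (inv_le_one_of_one_le₀ hn)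
  norm_num at hbernoulli
  calc n * (2 ^ n⁻¹ - 1) ≤ n * n⁻¹ := by gcongr; linarith
    _ = 1 := mul_inv_cancel₀ hn0.ne'

theorem integral_inverse_isoperimetric_profile_general
    (N : ℕ) (hN : 2 ≤ N)
    (h : ℝ → ℝ)
    (hh_mono : MonotoneOn h (Set.Ici 0))
    (hh_pos : ∀ s : ℝ, 0 < s → 0 < h s)
    (hω_mono : MonotoneOn (fun s : ℝ => s ^ (((N : ℝ) - 1) / N) / h s) (Set.Ioi 0)) :
    ∀ v : ℝ, 0 < v →
      ((N : ℝ) / 2) * ((2 : ℝ) ^ ((N : ℝ)⁻¹) - 1) * v / h v ≤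
          (∫ s in (0:ℝ)..v, (h s)⁻¹) ∧
        (∫ s in (0:ℝ)..v, (h s)⁻¹) ≤ (N : ℝ) * v / h v := by
  intro v hv
  have hN1 : (1 : ℝ) ≤ N := by exact_mod_cast one_le_two.trans hN
  have ha : ((N : ℝ) - 1) / N < 1 := by rw [div_lt_one (by linarith)]; linarith
  have hvh : 0 ≤ v / h v := div_nonneg hv.le (hh_pos v hv).le
  have hconst := mul_two_rpow_inv_sub_one_le_one hN1
  constructor
  · calc (N : ℝ) / 2 * (2 ^ (N : ℝ)⁻¹ - 1) * v / h v
          = (N * (2 ^ (N : ℝ)⁻¹ - 1)) / 2 * (v / h v) := by ring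
      _ ≤ v / h v := by nlinarith
      _ ≤ ∫ s in (0:ℝ)..v, (h s)⁻¹ :=
        div_le_integral_inv_of_monotoneOn hh_pos (hh_mono.mono Ioi_subset_Ici_self)
          (intervalIntegrable_inv_of_monotoneOn_rpow_div hh_pos hω_mono ha hv.le) hv.le
  · calc ∫ s in (0:ℝ)..v, (h s)⁻¹ ≤ v / ((1 - ((N : ℝ) - 1) / N) * h v) :=
          integral_inv_le_of_monotoneOn_rpow_div hh_pos hω_mono ha hv
      _ = N * v / h v := by
        have : (N : ℝ) ≠ 0 := by linarith
        field_simp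
        ring

/-- Let `N ≥ 2` and let `h` be an isoperimetric profile (continuous,
nondecreasing, `h 0 = 0`, `h > 0` on `(0,∞)`, with `s ↦ s ^ ((N-1)/N) / h s`
nondecreasing on `(0,∞)`). Then for every `v > 0`:
`(N/2) * (2 ^ (1/N) - 1) * v / h v ≤ ∫_0^v ds / h s ≤ N * v / h v`. -/
theorem integral_inverse_isoperimetric_profile
    (N : ℕ) (hN : 2 ≤ N)
    (h : ℝ → ℝ)
    (hh_cont : ContinuousOn h (Set.Ici 0))
    (hh_mono : MonotoneOn h (Set.Ici 0))
    (hh0 : h 0 = 0)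
    (hh_pos : ∀ s : ℝ, 0 < s → 0 < h s)
    (hω_mono : MonotoneOn (fun s : ℝ => s ^ (((N : ℝ) - 1) / N) / h s) (Set.Ioi 0)) :
    ∀ v : ℝ, 0 < v →
      ((N : ℝ) / 2) * ((2 : ℝ) ^ ((N : ℝ)⁻¹) - 1) * v / h v ≤
          (∫ s in (0:ℝ)..v, (h s)⁻¹) ∧
        (∫ s in (0:ℝ)..v, (h s)⁻¹) ≤ (N : ℝ) * v / h v :=
  integral_inverse_isoperimetric_profile_general N hN h hh_mono hh_pos hω_mono
end

section
/- Let N ≥ 2 be an integer and 0 < c < 1. Let h : [0,∞) → [0,∞) be continuous and nondecreasing with h(0) = 0, h(s) > 0 for s > 0, and such that s ↦ s^{(N-1)/N}/h(s) is nondecreasing on (0,∞). Let V : [0,∞) → [0,∞) be a C¹ increasing bijection with V(0) = 0 satisfying c·h(V(R)) ≤ V'(R) ≤ c^{-1}·h(V(R)) for all R > 0. Then there exists a constant γ > 1, depending only on N and c, such that γ^{-1}·R ≤ V(R)/h(V(R)) ≤ γ·R for all R > 0. -/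
/-! The upper bound is the mean value theorem:
`V R = V' ξ * R ≤ c⁻¹ * h (V ξ) * R ≤ c⁻¹ * h (V R) * R` as `h` and `V` are monotone.
For the lower bound differentiate `V ^ (1/N)` instead: its derivative
`(1/N) V' V ^ (1/N - 1) ≥ (c/N) h (V) / V ^ ((N-1)/N)` is, on `(0, R)`, at least its value
at `R`, since `s ^ ((N-1)/N) / h s` is nondecreasing. Integrating,
`V R ^ (1/N) ≥ (c/N) R h (V R) / V R ^ ((N-1)/N)`, i.e. `V R ≥ (c/N) R h (V R)`.
So `γ = N / c` works. -/

open Set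

section VolumeGrowth

variable {h V V' : ℝ → ℝ}

theorem le_mul_profile_mul_of_deriv_le {K : ℝ} (hK : 0 ≤ K)
    (hV_deriv : ∀ t : ℝ, 0 ≤ t → HasDerivAt V (V' t) t) (hV_mono : MonotoneOn V (Ici 0))
    (hV0 : V 0 = 0) (hh_mono : MonotoneOn h (Ici 0))
    (hV'_ub : ∀ t : ℝ, 0 < t → V' t ≤ K * h (V t)) {R : ℝ} (hR : 0 ≤ R) :
    V R ≤ K * h (V R) * R := by
  have hV_nonneg : ∀ t : ℝ, 0 ≤ t → 0 ≤ V t := fun t ht =>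
    hV0 ▸ hV_mono self_mem_Ici ht ht
  have hV'_le : ∀ t ∈ interior (Icc 0 R), deriv V t ≤ K * h (V R) := by
    rw [interior_Icc]
    rintro t ⟨ht0, htR⟩
    rw [(hV_deriv t ht0.le).deriv]
    calc V' t ≤ K * h (V t) := hV'_ub t ht0
      _ ≤ K * h (V R) := by
        gcongr
        exact hh_mono (hV_nonneg t ht0.le) (hV_nonneg R hR) (hV_mono ht0.le hR htR.le)
  have := (convex_Icc 0 R).image_sub_le_mul_sub_of_deriv_le
    (fun t ht => (hV_deriv t ht.1).continuousAt.continuousWithinAt)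
    (fun t ht => (hV_deriv t (interior_subset ht).1).differentiableAt.differentiableWithinAt)
    hV'_le 0 (left_mem_Icc.2 hR) R (right_mem_Icc.2 hR) hR
  simpa [hV0] using this

theorem div_rpow_le_div_rpow_of_monotoneOn {q : ℝ} (hh_pos : ∀ s : ℝ, 0 < s → 0 < h s)
    (hω_mono : MonotoneOn (fun s : ℝ => s ^ q / h s) (Ioi 0)) {s S : ℝ} (hs : 0 < s)
    (hsS : s ≤ S) : h S / S ^ q ≤ h s / s ^ q := by
  rw [← inv_div, ← inv_div (s ^ q)]
  exact inv_anti₀ (div_pos (Real.rpow_pos_of_pos hs q) (hh_pos s hs))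
    (hω_mono hs (hs.trans_le hsS) hsS)

theorem mul_profile_mul_le_of_le_deriv {c p : ℝ} (hc : 0 ≤ c) (hp : 0 < p)
    (hV_deriv : ∀ t : ℝ, 0 ≤ t → HasDerivAt V (V' t) t) (hV_mono : StrictMonoOn V (Ici 0))
    (hV0 : V 0 = 0) (hh_pos : ∀ s : ℝ, 0 < s → 0 < h s)
    (hω_mono : MonotoneOn (fun s : ℝ => s ^ (1 - p) / h s) (Ioi 0))
    (hV'_lb : ∀ t : ℝ, 0 < t → c * h (V t) ≤ V' t) {R : ℝ} (hR : 0 < R) :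
    c * p * h (V R) * R ≤ V R := by
  have hV_pos : ∀ t : ℝ, 0 < t → 0 < V t := fun t ht =>
    hV0 ▸ hV_mono self_mem_Ici ht.le ht
  have hVR := hV_pos R hR
  have hderiv : ∀ t : ℝ, 0 < t →
      HasDerivAt (fun t => V t ^ p) (V' t * p * V t ^ (p - 1)) t := fun t ht =>
    (hV_deriv t ht.le).rpow_const (Or.inl (hV_pos t ht).ne')
  have hderiv_ge : ∀ t ∈ interior (Icc 0 R),
      c * p * (h (V R) / V R ^ (1 - p)) ≤ deriv (fun t => V t ^ p) t := by
    rw [interior_Icc]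
    rintro t ⟨ht0, htR⟩
    have hVt := hV_pos t ht0
    rw [(hderiv t ht0).deriv, show p - 1 = -(1 - p) by ring, Real.rpow_neg hVt.le]
    calc c * p * (h (V R) / V R ^ (1 - p)) ≤ c * p * (h (V t) / V t ^ (1 - p)) := by
          gcongr c * p * ?_
          exact div_rpow_le_div_rpow_of_monotoneOn hh_pos hω_mono hVt (hV_mono ht0.le hR.le htR).le
      _ = c * h (V t) * p * (V t ^ (1 - p))⁻¹ := by ring
      _ ≤ V' t * p * (V t ^ (1 - p))⁻¹ := by
          gcongr
          exact hV'_lb t ht0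
  have hcont : ContinuousOn (fun t => V t ^ p) (Icc 0 R) :=
    ContinuousOn.rpow_const (fun t ht => (hV_deriv t ht.1).continuousAt.continuousWithinAt)
      (fun _ _ => Or.inr hp.le)
  have := (convex_Icc 0 R).mul_sub_le_image_sub_of_le_deriv hcont
    (fun t ht => by
      rw [interior_Icc] at ht
      exact (hderiv t ht.1).differentiableAt.differentiableWithinAt)
    hderiv_ge 0 (left_mem_Icc.2 hR.le) R (right_mem_Icc.2 hR.le) hR.le
  rw [hV0, Real.zero_rpow hp.ne', sub_zero, sub_zero] at this
  calc c * p * h (V R) * R = c * p * (h (V R) / V R ^ (1 - p)) * R * V R ^ (1 - p) := by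
        field_simp
    _ ≤ V R ^ p * V R ^ (1 - p) := by gcongr
    _ = V R := by rw [← Real.rpow_add hVR, add_sub_cancel, Real.rpow_one]

end VolumeGrowth

theorem F_of_volume_comparable_to_radius_general
    (N : ℕ) (hN : 2 ≤ N) (c : ℝ) (hc0 : 0 < c) (hc1 : c < 1)
    (h : ℝ → ℝ)
    (hh_mono : MonotoneOn h (Set.Ici 0))
    (hh_pos : ∀ s : ℝ, 0 < s → 0 < h s)
    (hω_mono : MonotoneOn (fun s : ℝ => s ^ (((N : ℝ) - 1) / N) / h s) (Set.Ioi 0))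
    (V V' : ℝ → ℝ)
    (hV_deriv : ∀ R : ℝ, 0 ≤ R → HasDerivAt V (V' R) R)
    (hV_mono : StrictMonoOn V (Set.Ici 0))
    (hV0 : V 0 = 0)
    (hV'_lb : ∀ R : ℝ, 0 < R → c * h (V R) ≤ V' R)
    (hV'_ub : ∀ R : ℝ, 0 < R → V' R ≤ c⁻¹ * h (V R)) :
    ∃ γ : ℝ, 1 < γ ∧
      ∀ R : ℝ, 0 < R →
        γ⁻¹ * R ≤ V R / h (V R) ∧ V R / h (V R) ≤ γ * R := by
  have hN' : (2 : ℝ) ≤ N := by exact_mod_cast hN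
  have hω_mono' : MonotoneOn (fun s : ℝ => s ^ (1 - 1 / (N : ℝ)) / h s) (Ioi 0) := by
    rwa [show 1 - 1 / (N : ℝ) = ((N : ℝ) - 1) / N by field_simp]
  refine ⟨N / c, (one_lt_div hc0).2 (by linarith), fun R hR => ?_⟩
  have hhVR : 0 < h (V R) := hh_pos _ (hV0 ▸ hV_mono self_mem_Ici hR.le hR)
  have hlower := mul_profile_mul_le_of_le_deriv hc0.le (by positivity) hV_deriv hV_mono hV0
    hh_pos hω_mono' hV'_lb hR
  have hupper := le_mul_profile_mul_of_deriv_le (inv_nonneg.2 hc0.le) hV_deriv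
    hV_mono.monotoneOn hV0 hh_mono hV'_ub hR.le
  rw [inv_div, le_div_iff₀ hhVR, div_le_iff₀ hhVR]
  constructor
  · calc c / N * R * h (V R) = c * (1 / N) * h (V R) * R := by ring
      _ ≤ V R := hlower
  · calc V R ≤ c⁻¹ * h (V R) * R := hupper
      _ ≤ N * c⁻¹ * h (V R) * R := by
        gcongr
        exact le_mul_of_one_le_left (inv_nonneg.2 hc0.le) (by linarith)
      _ = N / c * R * h (V R) := by ring

/-- Under the hypotheses of Statement 5 (isoperimetric profile `h` and
volume function `V` with two-sided growth condition), there is `γ > 1` depending only on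
`N` and `c` with `γ⁻¹ * R ≤ V R / h (V R) ≤ γ * R` for all `R > 0`. -/
theorem F_of_volume_comparable_to_radius
    (N : ℕ) (hN : 2 ≤ N) (c : ℝ) (hc0 : 0 < c) (hc1 : c < 1)
    (h : ℝ → ℝ)
    (hh_cont : ContinuousOn h (Set.Ici 0))
    (hh_mono : MonotoneOn h (Set.Ici 0))
    (hh0 : h 0 = 0)
    (hh_pos : ∀ s : ℝ, 0 < s → 0 < h s)
    (hω_mono : MonotoneOn (fun s : ℝ => s ^ (((N : ℝ) - 1) / N) / h s) (Set.Ioi 0))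
    (V V' : ℝ → ℝ)
    (hV_deriv : ∀ R : ℝ, 0 ≤ R → HasDerivAt V (V' R) R)
    (hV'_cont : ContinuousOn V' (Set.Ici 0))
    (hV_mono : StrictMonoOn V (Set.Ici 0))
    (hV0 : V 0 = 0)
    (hV_surj : ∀ y : ℝ, 0 ≤ y → ∃ x : ℝ, 0 ≤ x ∧ V x = y)
    (hV'_lb : ∀ R : ℝ, 0 < R → c * h (V R) ≤ V' R)
    (hV'_ub : ∀ R : ℝ, 0 < R → V' R ≤ c⁻¹ * h (V R)) :
    ∃ γ : ℝ, 1 < γ ∧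
      ∀ R : ℝ, 0 < R →
        γ⁻¹ * R ≤ V R / h (V R) ∧ V R / h (V R) ≤ γ * R :=
  F_of_volume_comparable_to_radius_general N hN c hc0 hc1 h hh_mono hh_pos hω_mono V V' hV_deriv
    hV_mono hV0 hV'_lb hV'_ub
end

section
/- Let N ≥ 2 be an integer, 0 < α1 < α2 < p < N, and 0 < c < 1. Let V : [0,∞) → [0,∞) be a C¹ strictly increasing bijection with V(0) = 0 and inverse V^{(-1)}, satisfying ∫_0^k V^{(-1)}(t)^{-p} dt ≤ c^{-1}·k·V^{(-1)}(k)^{-p} for all k > 0 and V'(R) ≤ N·V(R)/R for all R > 0. Let ρ : [0,∞) → (0,∞) be continuous and nonincreasing such that s ↦ ρ(s)·s^{α1} is nonincreasing on (1,∞) and s ↦ ρ(s)·s^{α2} is nondecreasing on (1,∞). Assume vol_ρ(R) = ρ(R)·V(R) is a strictly increasing bijection of [0,∞) onto itself with inverse R_ρ, and that there exist constants C1 > C0 > 0 with C0·s^{1/N} ≤ R_ρ(s) ≤ C1·s^{1/N} whenever R_ρ(s) ≤ 1. Define W(r) = ρ(R_ρ(r))·R_ρ(r)^p·r^{−(p−α2)/(N−α1)}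 for r > 0. Then there exists a constant γ > 1 such that W(r) ≤ γ·W(s) for all s > r > 0. -/
/-!
Put `x = Rρ r`, so that `r = ρ x * V x`, and `β = (p - α2) / (N - α1)`. Since
`(N - α1) β = p - α2`, we have `W r = (ρ x * x ^ α2) * (ρ x * V x / x ^ (N - α1)) ^ (-β)`.
For `x ≥ 1` the first factor is nondecreasing, and
`ρ x * V x / x ^ (N - α1) = (ρ x * x ^ α1) * (V x / x ^ N)` is nonincreasing (the last factor
because `V' ≤ N V / R`), so `W` is nondecreasing on `[vol_ρ 1, ∞)`. For `x ≤ 1`,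
`Rρ r ≍ r ^ (1 / N)` and `ρ 1 ≤ ρ x ≤ ρ 0` give `W r ≍ r ^ (p / N - β)`, a nondecreasing power
since `β ≤ p / N`; this costs the factor `γ = (ρ 0 / ρ 1) (C1 / C0) ^ p`.
-/

open Set Real

theorem MonotoneOn.Ici_of_continuousWithinAt {f : ℝ → ℝ} {a : ℝ} (hf : MonotoneOn f (Ioi a))
    (ha : ContinuousWithinAt f (Ioi a) a) : MonotoneOn f (Ici a) := by
  have hcl : ClusterPt a (Filter.principal (Ioi a)) :=
    mem_closure_iff_clusterPt.1 (by simp [closure_Ioi])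
  simpa [Ioi_insert] using hf.insert_of_continuousWithinAt hcl ha

theorem AntitoneOn.Ici_of_continuousWithinAt {f : ℝ → ℝ} {a : ℝ} (hf : AntitoneOn f (Ioi a))
    (ha : ContinuousWithinAt f (Ioi a) a) : AntitoneOn f (Ici a) := fun _ hx _ hy hxy =>
  neg_le_neg_iff.1 <| (MonotoneOn.Ici_of_continuousWithinAt (f := fun x => -f x)
    (fun _ hx _ hy hxy => neg_le_neg (hf hx hy hxy)) ha.neg) hx hy hxy

theorem ContinuousOn.continuousWithinAt_mul_rpow_one {ρ : ℝ → ℝ} (hρ : ContinuousOn ρ (Ici 0))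
    (α : ℝ) : ContinuousWithinAt (fun s => ρ s * s ^ α) (Ioi 1) 1 :=
  ((hρ 1 (mem_Ici.2 zero_le_one)).mono (Ioi_subset_Ici zero_le_one)).mul
    (continuousAt_rpow_const 1 α (Or.inl one_ne_zero)).continuousWithinAt

theorem StrictMonoOn.monotoneOn_of_rightInvOn {α β : Type*} [LinearOrder α] [Preorder β]
    {f : α → β} {g : β → α} {s : Set α} {t : Set β} (hf : StrictMonoOn f s)
    (hg : ∀ y ∈ t, g y ∈ s ∧ f (g y) = y) : MonotoneOn g t := fun y hy z hz hyz =>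
  (hf.le_iff_le (hg y hy).1 (hg z hz).1).1 (by rwa [(hg y hy).2, (hg z hz).2])

theorem le_mul_of_monotoneOn_Ici {f : ℝ → ℝ} {a K r s : ℝ} (hK : 1 ≤ K)
    (hf_nonneg : ∀ s, a ≤ s → 0 ≤ f s) (hf_mono : MonotoneOn f (Ici a))
    (hf_small : ∀ r s, 0 < r → r ≤ s → s ≤ a → f r ≤ K * f s) (hr : 0 < r) (hrs : r ≤ s) :
    f r ≤ K * f s := by
  rcases le_total s a with hsa | has
  · exact hf_small r s hr hrs hsa
  rcases le_total a r with har | hra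
  · exact (hf_mono har (har.trans hrs) hrs).trans (le_mul_of_one_le_left (hf_nonneg s has) hK)
  · exact (hf_small r a hr hra le_rfl).trans
      (mul_le_mul_of_nonneg_left (hf_mono self_mem_Ici has has) (zero_le_one.trans hK))

theorem antitoneOn_div_rpow_of_hasDerivAt {V V' : ℝ → ℝ} {n : ℝ}
    (hV : ∀ x, 0 < x → HasDerivAt V (V' x) x) (hV' : ∀ x, 0 < x → V' x ≤ n * V x / x) :
    AntitoneOn (fun x => V x / x ^ n) (Ioi 0) := by
  have hderiv : ∀ x ∈ Ioi (0:ℝ), HasDerivAt (fun x => V x / x ^ n)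
      ((V' x * x ^ n - V x * (n * x ^ (n - 1))) / (x ^ n) ^ 2) x := fun x hx =>
    (hV x hx).div (hasDerivAt_rpow_const (Or.inl hx.ne')) (rpow_pos_of_pos hx n).ne'
  refine antitoneOn_of_hasDerivWithinAt_nonpos (convex_Ioi 0)
    (fun x hx => (hderiv x hx).continuousAt.continuousWithinAt)
    (fun x hx => (hderiv x (interior_subset hx)).hasDerivWithinAt) fun x hx => ?_
  rw [interior_Ioi] at hx
  have hx : 0 < x := hx
  have hnum : V' x * x ^ n - V x * (n * x ^ (n - 1)) = x ^ n * (V' x - n * V x / x) := by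
    rw [rpow_sub_one hx.ne']; field_simp
  rw [hnum]
  exact div_nonpos_of_nonpos_of_nonneg
    (mul_nonpos_of_nonneg_of_nonpos (by positivity) (sub_nonpos.2 (hV' x hx))) (sq_nonneg _)

theorem mul_rpow_mul_rpow_neg_eq {a v R n p α1 α2 β : ℝ} (hR : 0 < R) (ha : 0 ≤ a) (hv : 0 ≤ v)
    (hβ : (n - α1) * β = p - α2) :
    a * R ^ p * (a * v) ^ (-β) = a * R ^ α2 * (a * R ^ α1 * (v / R ^ n)) ^ (-β) := by
  have hquot : a * R ^ α1 * (v / R ^ n) = a * v / R ^ (n - α1) := by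
    rw [rpow_sub hR]; field_simp
  rw [hquot, div_rpow (mul_nonneg ha hv) (rpow_nonneg hR.le _), rpow_neg (rpow_nonneg hR.le _),
    ← rpow_mul hR.le, hβ, div_inv_eq_mul, mul_assoc a, mul_assoc a, mul_comm _ (R ^ (p - α2)),
    ← mul_assoc (R ^ α2), ← rpow_add hR, add_sub_cancel]

theorem rpow_mul_rpow_neg_eq {x r n p β : ℝ} (hx : 0 ≤ x) (hr : 0 < r) :
    x ^ p * r ^ (-β) = (x / r ^ n⁻¹) ^ p * r ^ (p / n - β) := by
  rw [div_rpow hx (rpow_nonneg hr.le _), ← rpow_mul hr.le, rpow_sub hr, rpow_neg hr.le,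
    inv_mul_eq_div]
  field_simp

theorem sub_div_sub_le_div {n p α1 α2 : ℝ} (hα1 : 0 ≤ α1) (hα12 : α1 ≤ α2) (hp : 0 ≤ p)
    (hpn : p ≤ n) (hα1n : α1 < n) : (p - α2) / (n - α1) ≤ p / n := by
  rw [div_le_div_iff₀ (by linarith) (by linarith)]
  nlinarith

noncomputable def W (ρ Rρ : ℝ → ℝ) (p β r : ℝ) : ℝ := ρ (Rρ r) * Rρ r ^ p * r ^ (-β)

section

variable {ρ V Rρ : ℝ → ℝ} {n p α1 α2 β C0 C1 a r s : ℝ}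

theorem W_nonneg (hρ_pos : ∀ R, 0 ≤ R → 0 < ρ R) (hRρ : 0 ≤ Rρ r) (hr : 0 ≤ r) :
    0 ≤ W ρ Rρ p β r := by
  have := hρ_pos _ hRρ
  unfold W
  positivity

theorem W_monotoneOn (hβ0 : 0 ≤ β) (hβ : (n - α1) * β = p - α2)
    (hρ_pos : ∀ R, 0 ≤ R → 0 < ρ R) (hV_pos : ∀ R, 0 < R → 0 < V R)
    (hV_growth : AntitoneOn (fun R => V R / R ^ n) (Ioi 0))
    (hdec : AntitoneOn (fun R => ρ R * R ^ α1) (Ici 1))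
    (hinc : MonotoneOn (fun R => ρ R * R ^ α2) (Ici 1))
    (hRρ_right : ∀ y, 0 ≤ y → 0 ≤ Rρ y ∧ ρ (Rρ y) * V (Rρ y) = y)
    (hRρ_mono : MonotoneOn Rρ (Ici 0)) (ha : 0 ≤ a) (hRρa : Rρ a = 1) :
    MonotoneOn (W ρ Rρ p β) (Ici a) := by
  intro r (har : a ≤ r) s _ hrs
  have hr : 0 ≤ r := ha.trans har
  have h1 : 1 ≤ Rρ r := hRρa ▸ hRρ_mono ha hr har
  have hxy : Rρ r ≤ Rρ s := hRρ_mono hr (hr.trans hrs) hrs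
  set x := Rρ r
  set y := Rρ s
  have hx : 0 < x := zero_lt_one.trans_le h1
  have hy : 0 < y := hx.trans_le hxy
  have hρx := hρ_pos x hx.le
  have hρy := hρ_pos y hy.le
  have hvoly : 0 < ρ y * y ^ α1 * (V y / y ^ n) :=
    mul_pos (mul_pos hρy (rpow_pos_of_pos hy _)) (div_pos (hV_pos y hy) (rpow_pos_of_pos hy _))
  -- `ρ R * V R / R ^ (n - α1)`, written as a product of two nonincreasing factors
  have hvol : ρ y * y ^ α1 * (V y / y ^ n) ≤ ρ x * x ^ α1 * (V x / x ^ n) :=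
    mul_le_mul (hdec h1 (h1.trans hxy) hxy) (hV_growth hx hy hxy)
      (div_nonneg (hV_pos y hy).le (rpow_nonneg hy.le _)) (mul_nonneg hρx.le (rpow_nonneg hx.le _))
  calc W ρ Rρ p β r = ρ x * x ^ p * (ρ x * V x) ^ (-β) := by rw [(hRρ_right r hr).2]; rfl
    _ = ρ x * x ^ α2 * (ρ x * x ^ α1 * (V x / x ^ n)) ^ (-β) :=
      mul_rpow_mul_rpow_neg_eq hx hρx.le (hV_pos x hx).le hβ
    _ ≤ ρ y * y ^ α2 * (ρ y * y ^ α1 * (V y / y ^ n)) ^ (-β) :=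
      mul_le_mul (hinc h1 (h1.trans hxy) hxy) (rpow_le_rpow_of_nonpos hvoly hvol (neg_nonpos.2 hβ0))
        (rpow_nonneg (hvoly.le.trans hvol) _) (mul_nonneg hρy.le (rpow_nonneg hy.le _))
    _ = ρ y * y ^ p * (ρ y * V y) ^ (-β) :=
      (mul_rpow_mul_rpow_neg_eq hy hρy.le (hV_pos y hy).le hβ).symm
    _ = W ρ Rρ p β s := by rw [(hRρ_right s (hr.trans hrs)).2]; rfl

theorem W_le_of_le_one (hp : 0 ≤ p) (hρ0 : 0 ≤ ρ 0) (hρ_anti : AntitoneOn ρ (Ici 0)) (hr : 0 < r)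
    (hx0 : 0 ≤ Rρ r) (hx : Rρ r ≤ C1 * r ^ n⁻¹) :
    W ρ Rρ p β r ≤ ρ 0 * C1 ^ p * r ^ (p / n - β) := by
  rw [W, mul_assoc (ρ (Rρ r)), rpow_mul_rpow_neg_eq hx0 hr, mul_assoc (ρ 0)]
  gcongr
  · exact hρ_anti self_mem_Ici hx0 hx0
  · exact (div_le_iff₀ (rpow_pos_of_pos hr _)).2 hx

theorem le_W_of_le_one (hp : 0 ≤ p) (hρ1 : 0 ≤ ρ 1) (hρ_anti : AntitoneOn ρ (Ici 0))
    (hC0 : 0 ≤ C0) (hs : 0 < s) (hy1 : Rρ s ≤ 1) (hy : C0 * s ^ n⁻¹ ≤ Rρ s) :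
    ρ 1 * C0 ^ p * s ^ (p / n - β) ≤ W ρ Rρ p β s := by
  have hy0 : 0 ≤ Rρ s := (by positivity : 0 ≤ C0 * s ^ n⁻¹).trans hy
  rw [W, mul_assoc (ρ (Rρ s)), rpow_mul_rpow_neg_eq hy0 hs, mul_assoc (ρ 1)]
  have hρy : ρ 1 ≤ ρ (Rρ s) := hρ_anti hy0 (mem_Ici.2 zero_le_one) hy1
  have hρy0 : 0 ≤ ρ (Rρ s) := hρ1.trans hρy
  gcongr
  exact (le_div_iff₀ (rpow_pos_of_pos hs _)).2 hy

theorem W_le_mul_W_of_le_one (hp : 0 ≤ p) (hβ : β ≤ p / n) (hρ1 : 0 < ρ 1)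
    (hρ_anti : AntitoneOn ρ (Ici 0)) (hC0 : 0 < C0)
    (hRρ_small : ∀ s, 0 < s → Rρ s ≤ 1 → C0 * s ^ n⁻¹ ≤ Rρ s ∧ Rρ s ≤ C1 * s ^ n⁻¹)
    (hr : 0 < r) (hrs : r ≤ s) (hx0 : 0 ≤ Rρ r) (hx1 : Rρ r ≤ 1) (hy1 : Rρ s ≤ 1) :
    W ρ Rρ p β r ≤ ρ 0 / ρ 1 * (C1 / C0) ^ p * W ρ Rρ p β s := by
  have hs : 0 < s := hr.trans_le hrs
  have hρ0 : 0 ≤ ρ 0 := hρ1.le.trans (hρ_anti self_mem_Ici (mem_Ici.2 zero_le_one) zero_le_one)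
  have hC1 : 0 ≤ C1 := by
    have := hx0.trans (hRρ_small r hr hx1).2
    exact nonneg_of_mul_nonneg_left this (rpow_pos_of_pos hr _)
  calc W ρ Rρ p β r ≤ ρ 0 * C1 ^ p * r ^ (p / n - β) :=
        W_le_of_le_one hp hρ0 hρ_anti hr hx0 (hRρ_small r hr hx1).2
    _ ≤ ρ 0 * C1 ^ p * s ^ (p / n - β) := by gcongr
    _ = ρ 0 / ρ 1 * (C1 / C0) ^ p * (ρ 1 * C0 ^ p * s ^ (p / n - β)) := by
        rw [div_rpow hC1 hC0.le]
        field_simp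
    _ ≤ ρ 0 / ρ 1 * (C1 / C0) ^ p * W ρ Rρ p β s := by
        gcongr
        exact le_W_of_le_one hp hρ1.le hρ_anti hC0.le hs hy1 (hRρ_small s hs hy1).1

end

theorem W_almost_monotone_general
    (N : ℕ) (p α1 α2 : ℝ)
    (hα1 : 0 < α1) (hα12 : α1 < α2) (hα2p : α2 < p) (hpN : p < N)
    (V V' : ℝ → ℝ)
    (hV_deriv : ∀ R : ℝ, 0 ≤ R → HasDerivAt V (V' R) R)
    (hV_mono : StrictMonoOn V (Set.Ici 0))
    (hV0 : V 0 = 0)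
    (hV'_ub : ∀ R : ℝ, 0 < R → V' R ≤ (N : ℝ) * V R / R)
    (ρ : ℝ → ℝ)
    (hρ_pos : ∀ s : ℝ, 0 ≤ s → 0 < ρ s)
    (hρ_cont : ContinuousOn ρ (Set.Ici 0))
    (hρ_anti : AntitoneOn ρ (Set.Ici 0))
    (hρ_dec : AntitoneOn (fun s : ℝ => ρ s * s ^ α1) (Set.Ioi 1))
    (hρ_inc : MonotoneOn (fun s : ℝ => ρ s * s ^ α2) (Set.Ioi 1))
    (Rρ : ℝ → ℝ)
    (hvol_mono : StrictMonoOn (fun R : ℝ => ρ R * V R) (Set.Ici 0))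
    (hRρ_left : ∀ R : ℝ, 0 ≤ R → Rρ (ρ R * V R) = R)
    (hRρ_right : ∀ y : ℝ, 0 ≤ y → 0 ≤ Rρ y ∧ ρ (Rρ y) * V (Rρ y) = y)
    (C0 C1 : ℝ) (hC0 : 0 < C0) (hC01 : C0 < C1)
    (hRρ_small : ∀ s : ℝ, 0 < s → Rρ s ≤ 1 →
      C0 * s ^ ((N : ℝ)⁻¹) ≤ Rρ s ∧ Rρ s ≤ C1 * s ^ ((N : ℝ)⁻¹)) :
    ∃ γ : ℝ, 1 < γ ∧
      ∀ r s : ℝ, 0 < r → r < s →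
        ρ (Rρ r) * Rρ r ^ p * r ^ (-((p - α2) / ((N : ℝ) - α1))) ≤
          γ * (ρ (Rρ s) * Rρ s ^ p * s ^ (-((p - α2) / ((N : ℝ) - α1)))) := by
  have hNα : 0 < (N : ℝ) - α1 := by linarith
  have hp : 0 < p := by linarith
  set β := (p - α2) / ((N : ℝ) - α1)
  have hβ : ((N : ℝ) - α1) * β = p - α2 := mul_div_cancel₀ _ hNα.ne'
  have hRρ_mono : MonotoneOn Rρ (Ici 0) := hvol_mono.monotoneOn_of_rightInvOn hRρ_right
  have hV_pos : ∀ R, 0 < R → 0 < V R := fun R hR => hV0 ▸ hV_mono self_mem_Ici hR.le hR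
  have hρ1 : 0 < ρ 1 := hρ_pos 1 zero_le_one
  have hr1 : 0 < ρ 1 * V 1 := mul_pos hρ1 (hV_pos 1 one_pos)
  have hRρ_r1 : Rρ (ρ 1 * V 1) = 1 := hRρ_left 1 zero_le_one
  have large : MonotoneOn (W ρ Rρ p β) (Ici (ρ 1 * V 1)) :=
    W_monotoneOn (div_nonneg (by linarith) hNα.le) hβ hρ_pos hV_pos
      (antitoneOn_div_rpow_of_hasDerivAt (fun R hR => hV_deriv R hR.le) hV'_ub)
      (hρ_dec.Ici_of_continuousWithinAt (hρ_cont.continuousWithinAt_mul_rpow_one α1))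
      (hρ_inc.Ici_of_continuousWithinAt (hρ_cont.continuousWithinAt_mul_rpow_one α2))
      hRρ_right hRρ_mono hr1.le hRρ_r1
  have small (r s : ℝ) (hr : 0 < r) (hrs : r ≤ s) (hs : s ≤ ρ 1 * V 1) :
      W ρ Rρ p β r ≤ ρ 0 / ρ 1 * (C1 / C0) ^ p * W ρ Rρ p β s := by
    have hy1 : Rρ s ≤ 1 := hRρ_r1 ▸ hRρ_mono (hr.le.trans hrs) hr1.le hs
    exact W_le_mul_W_of_le_one hp.le
      (sub_div_sub_le_div hα1.le hα12.le hp.le hpN.le (by linarith)) hρ1 hρ_anti hC0 hRρ_small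
      hr hrs (hRρ_right r hr.le).1
      ((hRρ_mono hr.le (hr.le.trans hrs) hrs).trans hy1) hy1
  have hγ : 1 < ρ 0 / ρ 1 * (C1 / C0) ^ p := one_lt_mul_of_le_of_lt
    ((one_le_div hρ1).2 (hρ_anti self_mem_Ici (mem_Ici.2 zero_le_one) zero_le_one))
    (one_lt_rpow ((one_lt_div hC0).2 hC01) hp)
  have hW_nonneg (s : ℝ) (hs : ρ 1 * V 1 ≤ s) : 0 ≤ W ρ Rρ p β s :=
    W_nonneg hρ_pos (hRρ_right s (hr1.le.trans hs)).1 (hr1.le.trans hs)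
  exact ⟨_, hγ, fun r s hr hrs => le_mul_of_monotoneOn_Ici hγ.le hW_nonneg large small hr hrs.le⟩

/-- Under the geometric and density hypotheses (non-parabolicity,
`V' R ≤ N V R / R`, `ρ s s^{α1}` nonincreasing and `ρ s s^{α2}` nondecreasing on `(1,∞)`,
`vol_ρ = ρ · V` an increasing bijection with inverse `Rρ` comparable to `s^{1/N}` near
zero), the function `W r = ρ (Rρ r) * Rρ r ^ p * r ^ (-(p-α2)/(N-α1))` is almost
nondecreasing: there is `γ > 1` with `W r ≤ γ * W s` for all `s > r > 0`. -/
theorem W_almost_monotone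
    (N : ℕ) (hN : 2 ≤ N) (p α1 α2 c : ℝ)
    (hα1 : 0 < α1) (hα12 : α1 < α2) (hα2p : α2 < p) (hpN : p < N)
    (hc0 : 0 < c) (hc1 : c < 1)
    (V V' Vinv : ℝ → ℝ)
    (hV_deriv : ∀ R : ℝ, 0 ≤ R → HasDerivAt V (V' R) R)
    (hV'_cont : ContinuousOn V' (Set.Ici 0))
    (hV_mono : StrictMonoOn V (Set.Ici 0))
    (hV0 : V 0 = 0)
    (hV_surj : ∀ y : ℝ, 0 ≤ y → ∃ x : ℝ, 0 ≤ x ∧ V x = y)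
    (hVinv_left : ∀ x : ℝ, 0 ≤ x → Vinv (V x) = x)
    (hVinv_right : ∀ y : ℝ, 0 ≤ y → 0 ≤ Vinv y ∧ V (Vinv y) = y)
    (h_phyp : ∀ k : ℝ, 0 < k →
      (∫ t in (0:ℝ)..k, Vinv t ^ (-p)) ≤ c⁻¹ * k * Vinv k ^ (-p))
    (hV'_ub : ∀ R : ℝ, 0 < R → V' R ≤ (N : ℝ) * V R / R)
    (ρ : ℝ → ℝ)
    (hρ_pos : ∀ s : ℝ, 0 ≤ s → 0 < ρ s)
    (hρ_cont : ContinuousOn ρ (Set.Ici 0))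
    (hρ_anti : AntitoneOn ρ (Set.Ici 0))
    (hρ_dec : AntitoneOn (fun s : ℝ => ρ s * s ^ α1) (Set.Ioi 1))
    (hρ_inc : MonotoneOn (fun s : ℝ => ρ s * s ^ α2) (Set.Ioi 1))
    (Rρ : ℝ → ℝ)
    (hvol_mono : StrictMonoOn (fun R : ℝ => ρ R * V R) (Set.Ici 0))
    (hvol_surj : ∀ y : ℝ, 0 ≤ y → ∃ R : ℝ, 0 ≤ R ∧ ρ R * V R = y)
    (hRρ_left : ∀ R : ℝ, 0 ≤ R → Rρ (ρ R * V R) = R)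
    (hRρ_right : ∀ y : ℝ, 0 ≤ y → 0 ≤ Rρ y ∧ ρ (Rρ y) * V (Rρ y) = y)
    (C0 C1 : ℝ) (hC0 : 0 < C0) (hC01 : C0 < C1)
    (hRρ_small : ∀ s : ℝ, 0 < s → Rρ s ≤ 1 →
      C0 * s ^ ((N : ℝ)⁻¹) ≤ Rρ s ∧ Rρ s ≤ C1 * s ^ ((N : ℝ)⁻¹)) :
    ∃ γ : ℝ, 1 < γ ∧
      ∀ r s : ℝ, 0 < r → r < s →
        ρ (Rρ r) * Rρ r ^ p * r ^ (-((p - α2) / ((N : ℝ) - α1))) ≤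
          γ * (ρ (Rρ s) * Rρ s ^ p * s ^ (-((p - α2) / ((N : ℝ) - α1)))) :=
  W_almost_monotone_general N p α1 α2 hα1 hα12 hα2p hpN V V' hV_deriv hV_mono hV0 hV'_ub ρ hρ_pos
    hρ_cont hρ_anti hρ_dec hρ_inc Rρ hvol_mono hRρ_left hRρ_right C0 C1 hC0 hC01 hRρ_small
end

section
/- Let λ > 0 and σ ∈ ℝ. Let ψ : (1,∞) → (0,∞) be a continuous strictly increasing function with ψ(s) → ∞ as s → ∞, such that ψ(s)·s^{−λ}·(ln s)^{−σ} → 1 as s → ∞. Then its inverse function ψ^{(-1)} satisfies ψ^{(-1)}(v)·λ^{−σ/λ}·v^{−1/λ}·(ln v)^{σ/λ} → 1 as v → ∞; that is, ψ^{(-1)}(v) = λ^{σ/λ}·v^{1/λ}·(ln v)^{−σ/λ}·(1 + o(1)) as v → ∞. -/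
/-!
Write `v = ψ s` with `s = ψ⁻¹ v`, which tends to infinity because `ψ` is monotone. Then
`v = e(s) s^λ (ln s)^σ` with `e(s) → 1`, so `v^{-1/λ} = e(s)^{-1/λ} s⁻¹ (ln s)^{-σ/λ}`, and taking
logarithms gives `ln v / (λ ln s) → 1`. Substituting both into the expression for `s` leaves
`e(s)^{-1/λ} (ln v / (λ ln s))^{σ/λ} → 1`.
-/

open Filter Real Topology

lemma tendsto_atTop_of_monotoneOn_of_eventually_rightInverse {α β : Type*} [LinearOrder α]
    [NoMaxOrder α] [Preorder β] [NoMaxOrder β] {f : α → β} {g : β → α} {a : α}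
    (hf : MonotoneOn f (Set.Ioi a)) (hg : ∀ᶠ v in atTop, a < g v ∧ f (g v) = v) :
    Tendsto g atTop atTop := by
  obtain ⟨b, hab⟩ := exists_gt a
  rw [tendsto_atTop]
  intro M
  have hM : a < max M b := lt_max_of_lt_right hab
  filter_upwards [eventually_gt_atTop (f (max M b)), hg] with v hv ⟨hgv, hfg⟩
  refine (le_max_left M b).trans (le_of_not_gt fun hlt => ?_)
  have hle : v ≤ f (max M b) := hfg ▸ hf hgv hM hlt.le
  exact (hv.trans_le hle).false

lemma rpow_neg_mul_rpow_neg_mul_rpow_mul_rpow {a b : ℝ} (ha : 0 < a) (hb : 0 < b)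
    (x p q : ℝ) : x * a ^ (-p) * b ^ (-q) * a ^ p * b ^ q = x := by
  have hap : a ^ p ≠ 0 := (rpow_pos_of_pos ha p).ne'
  have hbq : b ^ q ≠ 0 := (rpow_pos_of_pos hb q).ne'
  rw [rpow_neg ha.le, rpow_neg hb.le]
  field_simp

lemma mul_rpow_neg_inv_mul_rpow_eq {s L e w lam : ℝ} (hs : 0 < s) (hL : 0 < L) (he : 0 < e)
    (hw : 0 < w) (hlam : 0 < lam) (σ : ℝ) :
    s * lam ^ (-(σ / lam)) * (e * s ^ lam * L ^ σ) ^ (-(1 / lam)) * w ^ (σ / lam)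
      = e ^ (-(1 / lam)) * (w / (lam * L)) ^ (σ / lam) := by
  rw [mul_rpow (by positivity) (rpow_nonneg hL.le σ), mul_rpow he.le (rpow_nonneg hs.le lam),
    ← rpow_mul hs.le, ← rpow_mul hL.le, div_rpow hw.le (by positivity), mul_rpow hlam.le hL.le,
    show lam * -(1 / lam) = -1 by field_simp, show σ * -(1 / lam) = -(σ / lam) by field_simp,
    rpow_neg_one, rpow_neg hL.le, rpow_neg hlam.le]
  have : L ^ (σ / lam) ≠ 0 := (rpow_pos_of_pos hL _).ne'
  have : lam ^ (σ / lam) ≠ 0 := (rpow_pos_of_pos hlam _).ne'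
  field_simp

section

variable {ψ : ℝ → ℝ} {lam σ : ℝ}
  (hψ : Tendsto (fun s => ψ s * s ^ (-lam) * log s ^ (-σ)) atTop (𝓝 1))
include hψ

lemma tendsto_log_div_log_of_tendsto_mul_rpow_mul_rpow :
    Tendsto (fun s => log (ψ s) / log s) atTop (𝓝 lam) := by
  set e := fun s => ψ s * s ^ (-lam) * log s ^ (-σ)
  have hloge : Tendsto (fun s => log (e s) / log s) atTop (𝓝 0) := by
    simpa [div_eq_mul_inv] using ((continuousAt_log one_ne_zero).tendsto.comp hψ).mul
      (tendsto_inv_atTop_zero.comp tendsto_log_atTop)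
  have hloglog : Tendsto (fun s => log (log s) / log s) atTop (𝓝 0) :=
    isLittleO_log_id_atTop.tendsto_div_nhds_zero.comp tendsto_log_atTop
  have hsum := (hloge.add_const lam).add (hloglog.const_mul σ)
  rw [zero_add, mul_zero, add_zero] at hsum
  refine hsum.congr' ?_
  filter_upwards [eventually_gt_atTop 1, hψ.eventually (eventually_gt_nhds one_pos)]
    with s hs hes
  have hs0 : 0 < s := one_pos.trans hs
  have hL : 0 < log s := log_pos hs
  have hψs : ψ s = e s * s ^ lam * log s ^ σ :=
    (rpow_neg_mul_rpow_neg_mul_rpow_mul_rpow hs0 hL (ψ s) lam σ).symm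
  rw [hψs, log_mul (by positivity) (rpow_pos_of_pos hL σ).ne',
    log_mul hes.ne' (rpow_pos_of_pos hs0 lam).ne', log_rpow hs0, log_rpow hL]
  field_simp

lemma tendsto_mul_rpow_mul_log_rpow_of_tendsto_mul_rpow_mul_rpow (hlam : 0 < lam) :
    Tendsto (fun s => s * lam ^ (-(σ / lam)) * ψ s ^ (-(1 / lam)) * log (ψ s) ^ (σ / lam))
      atTop (𝓝 1) := by
  have hratio : Tendsto (fun s => log (ψ s) / (lam * log s)) atTop (𝓝 1) := by
    simpa [hlam.ne', div_div, mul_comm] using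
      (tendsto_log_div_log_of_tendsto_mul_rpow_mul_rpow hψ).div_const lam
  have hlim := (hψ.rpow_const (p := -(1 / lam)) (Or.inl one_ne_zero)).mul
    (hratio.rpow_const (p := σ / lam) (Or.inl one_ne_zero))
  rw [one_rpow, one_rpow, one_mul] at hlim
  refine hlim.congr' ?_
  filter_upwards [eventually_gt_atTop 1, hψ.eventually (eventually_gt_nhds one_pos),
    hratio.eventually (eventually_gt_nhds one_pos)] with s hs hes hρ
  have hs0 : 0 < s := one_pos.trans hs
  have hL : 0 < log s := log_pos hs
  have hw : 0 < log (ψ s) := (div_pos_iff_of_pos_right (by positivity)).mp hρ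
  have key := mul_rpow_neg_inv_mul_rpow_eq hs0 hL hes hw hlam σ
  rw [rpow_neg_mul_rpow_neg_mul_rpow_mul_rpow hs0 hL] at key
  exact key.symm

end

theorem inverse_power_log_asymptotics_general
    (lam σ : ℝ) (hlam : 0 < lam)
    (ψ ψinv : ℝ → ℝ)
    (hψ_mono : StrictMonoOn ψ (Set.Ioi 1))
    (hψ_asymp : Tendsto (fun s : ℝ => ψ s * s ^ (-lam) * Real.log s ^ (-σ))
      atTop (nhds 1))
    (hψinv_right : ∀ᶠ v in atTop, 1 < ψinv v ∧ ψ (ψinv v) = v) :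
    Tendsto (fun v : ℝ =>
        ψinv v * lam ^ (-(σ / lam)) * v ^ (-(1 / lam)) * Real.log v ^ (σ / lam))
      atTop (nhds 1) := by
  have hψinv_top : Tendsto ψinv atTop atTop :=
    tendsto_atTop_of_monotoneOn_of_eventually_rightInverse hψ_mono.monotoneOn hψinv_right
  refine ((tendsto_mul_rpow_mul_log_rpow_of_tendsto_mul_rpow_mul_rpow hψ_asymp hlam).comp
    hψinv_top).congr' ?_
  filter_upwards [hψinv_right] with v ⟨_, hv⟩
  simp only [Function.comp_apply, hv]

/-- Let `λ > 0`, `σ ∈ ℝ`, and let `ψ : (1,∞) → (0,∞)` be a continuous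
strictly increasing function tending to `∞`, with `ψ s * s^{-λ} * (ln s)^{-σ} → 1` as
`s → ∞`. Then the inverse `ψinv` satisfies
`ψinv v * λ^{-σ/λ} * v^{-1/λ} * (ln v)^{σ/λ} → 1` as `v → ∞`. -/
theorem inverse_power_log_asymptotics
    (lam σ : ℝ) (hlam : 0 < lam)
    (ψ ψinv : ℝ → ℝ)
    (hψ_pos : ∀ s : ℝ, 1 < s → 0 < ψ s)
    (hψ_cont : ContinuousOn ψ (Set.Ioi 1))
    (hψ_mono : StrictMonoOn ψ (Set.Ioi 1))
    (hψ_top : Tendsto ψ atTop atTop)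
    (hψ_asymp : Tendsto (fun s : ℝ => ψ s * s ^ (-lam) * Real.log s ^ (-σ))
      atTop (nhds 1))
    (hψinv_left : ∀ s : ℝ, 1 < s → ψinv (ψ s) = s)
    (hψinv_right : ∀ᶠ v in atTop, 1 < ψinv v ∧ ψ (ψinv v) = v) :
    Tendsto (fun v : ℝ =>
        ψinv v * lam ^ (-(σ / lam)) * v ^ (-(1 / lam)) * Real.log v ^ (σ / lam))
      atTop (nhds 1) :=
  inverse_power_log_asymptotics_general lam σ hlam ψ ψinv hψ_mono hψ_asymp hψinv_right
end
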